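/- Let θc ∈ (0, π/2), let α : ℝ → ℝ be a locally Lipschitz, strictly increasing function with α(0) = 0 (an extended class-K function), and let ω : ℝ → ℝ³ be Lipschitz continuous. Let R : ℝ → M₃(ℝ) be a differentiable curve with R(t) ∈ SO(3) for all t, satisfying the attitude kinematics Ṙ(t) = R(t)·ω̂(t). Suppose that for all t ≥ 0 the condition e₃ᵀ R(t) ê₃ ω(t) − α(e₃ᵀ R(t) e₃ − cos θc) ≥ 0 holds. If e₃ᵀ R(0) e₃ ≤ cos θc, then e₃ᵀ R(t) e₃ ≤ cos θc for all t ≥ 0 (i.e., the exterior conic constraint set {R ∈ SO(3) : e₃ᵀ R e₃ ≤ cos θc} is forward invariant). -/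

import Mathlib

/-!
Along the kinematics, `h(t) = e₃ᵀ R(t) e₃` has derivative `e₃ᵀ R ω̂ e₃ = e₃ᵀ R (ω × e₃)
= -e₃ᵀ R ê₃ ω`. Where the constraint is violated, `h - cos θc > 0`, so the barrier condition
gives `ḣ ≤ -α(h - cos θc) < -α(0) = 0`; hence `h` can never cross the level `cos θc` upwards.
-/

open Matrix

/-- The hat map: `hatMap a` is the skew-symmetric matrix with `(hatMap a) *ᵥ b = a ×₃ b`. -/
noncomputable def hatMap (a : Fin 3 → ℝ) : Matrix (Fin 3) (Fin 3) ℝ :=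
  !![0, -a 2, a 1; a 2, 0, -a 0; -a 1, a 0, 0]

/-- The third standard basis vector `e₃ = (0,0,1)ᵀ`. -/
def e3 : Fin 3 → ℝ := ![0, 0, 1]

/-- `SO3 R` means `R` is a rotation matrix: `RᵀR = I` and `det R = 1`. -/
def SO3 (R : Matrix (Fin 3) (Fin 3) ℝ) : Prop := Rᵀ * R = 1 ∧ R.det = 1

open Set

theorem le_of_hasDerivAt_nonpos_of_lt {f f' : ℝ → ℝ} {a b c : ℝ} (hab : a ≤ b)
    (hf : ContinuousOn f (Icc a b)) (hf' : ∀ x ∈ Ioo a b, HasDerivAt f (f' x) x)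
    (hf'_nonpos : ∀ x ∈ Ioo a b, c < f x → f' x ≤ 0) (ha : f a ≤ c) : f b ≤ c := by
  have hclosed : IsClosed (Icc a b ∩ f ⁻¹' Iic c) :=
    hf.preimage_isClosed_of_isClosed isClosed_Icc isClosed_Iic
  -- `t₀` is the last time in `[a, b]` at which `f ≤ c`; on `(t₀, b)` the derivative is `≤ 0`.
  obtain ⟨t₀, ⟨⟨ht₀a, ht₀b⟩, ht₀c⟩, ht₀_last⟩ :=
    (isCompact_Icc.of_isClosed_subset hclosed inter_subset_left).exists_isGreatest
      ⟨a, ⟨le_rfl, hab⟩, ha⟩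
  rcases ht₀b.eq_or_lt with rfl | ht₀b
  · exact ht₀c
  have hIoo : Ioo t₀ b ⊆ Ioo a b := Ioo_subset_Ioo_left ht₀a
  have hanti : AntitoneOn f (Icc t₀ b) := by
    refine antitoneOn_of_hasDerivWithinAt_nonpos (f' := f') (convex_Icc _ _)
      (hf.mono (Icc_subset_Icc_left ht₀a)) (fun x hx => ?_) (fun x hx => ?_)
    · rw [interior_Icc] at hx ⊢
      exact (hf' x (hIoo hx)).hasDerivWithinAt
    · rw [interior_Icc] at hx
      refine hf'_nonpos x (hIoo hx) (not_le.mp fun hxc => ?_)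
      exact hx.1.not_ge (ht₀_last ⟨⟨ht₀a.trans hx.1.le, hx.2.le⟩, hxc⟩)
  exact (hanti ⟨le_rfl, ht₀b.le⟩ ⟨ht₀b.le, le_rfl⟩ ht₀b.le).trans ht₀c

theorem hatMap_mulVec (a b : Fin 3 → ℝ) : hatMap a *ᵥ b = a ⨯₃ b := by
  ext i
  fin_cases i <;> simp [hatMap, cross_apply, mulVec, dotProduct, Fin.sum_univ_three] <;> ring

theorem dotProduct_mul_hatMap_mulVec (A : Matrix (Fin 3) (Fin 3) ℝ) (u v w : Fin 3 → ℝ) :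
    u ⬝ᵥ (A * hatMap w) *ᵥ v = -(u ⬝ᵥ (A * hatMap v) *ᵥ w) := by
  rw [← mulVec_mulVec, ← mulVec_mulVec, hatMap_mulVec, hatMap_mulVec, ← cross_anticomm v w,
    mulVec_neg, dotProduct_neg]

theorem e3_dotProduct_mulVec_e3 (A : Matrix (Fin 3) (Fin 3) ℝ) : e3 ⬝ᵥ A *ᵥ e3 = A 2 2 := by
  simp [e3, dotProduct, mulVec, Fin.sum_univ_three]

theorem stmt1_general
    (θc : ℝ)
    (α : ℝ → ℝ) (hα_mono : StrictMono α) (hα0 : α 0 = 0)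
    (ω : ℝ → Fin 3 → ℝ)
    (R : ℝ → Matrix (Fin 3) (Fin 3) ℝ)
    (hdyn : ∀ t, ∀ i j, HasDerivAt (fun s => R s i j) ((R t * hatMap (ω t)) i j) t)
    (hcond : ∀ t ≥ (0 : ℝ),
      e3 ⬝ᵥ (R t * hatMap e3) *ᵥ (ω t) - α (e3 ⬝ᵥ (R t) *ᵥ e3 - Real.cos θc) ≥ 0)
    (hinit : e3 ⬝ᵥ (R 0) *ᵥ e3 ≤ Real.cos θc) :
    ∀ t ≥ (0 : ℝ), e3 ⬝ᵥ (R t) *ᵥ e3 ≤ Real.cos θc := by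
  have hderiv : ∀ t, HasDerivAt (fun s => e3 ⬝ᵥ R s *ᵥ e3)
      (-(e3 ⬝ᵥ (R t * hatMap e3) *ᵥ ω t)) t := fun t => by
    simpa only [← dotProduct_mul_hatMap_mulVec, e3_dotProduct_mulVec_e3] using hdyn t 2 2
  intro t ht
  refine le_of_hasDerivAt_nonpos_of_lt (f := fun s => e3 ⬝ᵥ R s *ᵥ e3) ht
    (fun s _ => (hderiv s).continuousAt.continuousWithinAt) (fun s _ => hderiv s)
    (fun s hs hviol => ?_) hinit
  have hα_pos : 0 < α (e3 ⬝ᵥ R s *ᵥ e3 - Real.cos θc) :=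
    hα0 ▸ hα_mono (sub_pos.mpr hviol)
  linarith [hcond s hs.1.le]

/-- Forward invariance of the exterior conic constraint set `{R ∈ SO(3) : e₃ᵀ R e₃ ≤ cos θc}`
under the ZCBF condition `e₃ᵀ R ê₃ ω - α(e₃ᵀ R e₃ - cos θc) ≥ 0`. -/
theorem stmt1
    (θc : ℝ) (hθc : θc ∈ Set.Ioo 0 (Real.pi / 2))
    (α : ℝ → ℝ) (hα_lip : LocallyLipschitz α) (hα_mono : StrictMono α) (hα0 : α 0 = 0)
    (ω : ℝ → Fin 3 → ℝ) (hω : ∃ K, LipschitzWith K ω)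
    (R : ℝ → Matrix (Fin 3) (Fin 3) ℝ)
    (hSO3 : ∀ t, SO3 (R t))
    (hdyn : ∀ t, ∀ i j, HasDerivAt (fun s => R s i j) ((R t * hatMap (ω t)) i j) t)
    (hcond : ∀ t ≥ (0 : ℝ),
      e3 ⬝ᵥ (R t * hatMap e3) *ᵥ (ω t) - α (e3 ⬝ᵥ (R t) *ᵥ e3 - Real.cos θc) ≥ 0)
    (hinit : e3 ⬝ᵥ (R 0) *ᵥ e3 ≤ Real.cos θc) :
    ∀ t ≥ (0 : ℝ), e3 ⬝ᵥ (R t) *ᵥ e3 ≤ Real.cos θc :=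
  stmt1_general θc α hα_mono hα0 ω R hdyn hcond hinit
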